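/- arXiv:2005.00990 — 2 statements merged into one kernel-verified Lean document; each statement's English description precedes it below -/
import Mathlib

section
/- Let Δ be a length-preserving relation over a finite alphabet Σ and Init ⊆ Σ*. If there exist sets Inv ⊆ Σ* and Rank ⊆ Σ* × Σ* such that: (1) Init ⊆ Inv; (2) Inv is inductive under Δ; (3) Δ ∩ (Inv × Inv) ⊆ Rank; (4) Rank is transitive; (5) Rank is irreflexive; then there is no infinite Δ-run starting from any state in Init, i.e., the system terminates from Init. -/
/-!
The invariant holds along any run from `Init`, so consecutive states are `Rank`-related, and by
transitivity so are any two states of the run. Since `Δ` preserves length, the run stays among the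
finitely many words of length `|s₀|`, so some state repeats, contradicting irreflexivity.
-/

section ChainOfRel

variable {α : Type*} {r : α → α → Prop} {f : ℕ → α}

theorem apply_mem_of_forall_rel_succ {S : Set α} (hS : ∀ s ∈ S, ∀ s', r s s' → s' ∈ S)
    (hf : ∀ i, r (f i) (f (i + 1))) (h0 : f 0 ∈ S) (i : ℕ) : f i ∈ S := by
  induction i with
  | zero => exact h0
  | succ i ih => exact hS _ ih _ (hf i)

theorem apply_eq_apply_zero_of_forall_rel_succ {β : Type*} {φ : α → β}
    (hφ : ∀ u v, r u v → φ u = φ v) (hf : ∀ i, r (f i) (f (i + 1))) (i : ℕ) :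
    φ (f i) = φ (f 0) :=
  apply_mem_of_forall_rel_succ (S := {s | φ s = φ (f 0)})
    (fun _ hs _ h => (hφ _ _ h).symm.trans hs) hf rfl i

end ChainOfRel

theorem exists_lt_apply_eq_of_forall_rel_succ {A : Type*} [Finite A]
    {r : List A → List A → Prop} (hr : ∀ u v, r u v → u.length = v.length)
    {f : ℕ → List A} (hf : ∀ i, r (f i) (f (i + 1))) :
    ∃ a b, a < b ∧ f a = f b :=
  (List.finite_length_eq A (f 0).length).exists_lt_map_eq_of_forall_mem
    (apply_eq_apply_zero_of_forall_rel_succ hr hf)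

/-- Soundness of the invariant/ranking proof rule for termination of
length-preserving systems. -/
theorem ranking_implies_termination
    (A : Type) [Fintype A]
    (Δ : List A → List A → Prop)
    (hLP : ∀ u v, Δ u v → u.length = v.length)
    (Init : Set (List A))
    (Inv : Set (List A)) (Rank : List A → List A → Prop)
    (h1 : Init ⊆ Inv)
    (h2 : ∀ s ∈ Inv, ∀ s', Δ s s' → s' ∈ Inv)
    (h3 : ∀ s s', s ∈ Inv → s' ∈ Inv → Δ s s' → Rank s s')
    (h4 : ∀ x y z, Rank x y → Rank y z → Rank x z)
    (h5 : ∀ x, ¬ Rank x x) :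
    ¬ ∃ f : ℕ → List A, f 0 ∈ Init ∧ ∀ i, Δ (f i) (f (i + 1)) := by
  rintro ⟨f, hf0, hΔ⟩
  have hInv := apply_mem_of_forall_rel_succ h2 hΔ (h1 hf0)
  have hRank : ∀ i, Rank (f i) (f (i + 1)) := fun i => h3 _ _ (hInv i) (hInv (i + 1)) (hΔ i)
  have : IsTrans _ Rank := ⟨h4⟩
  obtain ⟨a, b, hab, hfab⟩ := exists_lt_apply_eq_of_forall_rel_succ hLP hΔ
  exact h5 _ (hfab ▸ Nat.rel_of_forall_rel_succ_of_lt Rank hRank hab)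
end

section
/- Conversely to the ranking-based soundness: if a length-preserving relation Δ over a finite alphabet admits no infinite run from any state in Init, then there exist Inv and Rank satisfying the five verification conditions (Init ⊆ Inv; Inv inductive; Δ ∩ (Inv × Inv) ⊆ Rank; Rank transitive; Rank irreflexive). In particular one may take Inv to be the set of states reachable from Init and Rank the transitive closure of Δ restricted to Inv. -/
/-! A terminating system cannot reach a cycle, since going around the cycle forever would be an
infinite run. Formally, "no infinite `Δ`-run from `s`" says exactly that `s` is accessible for the
converse of `Δ`; accessibility is inherited along `Δ`-steps and passes to the transitive closure,
and an accessible element is never related to itself. So the transitive closure of `Δ` is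
irreflexive on the reachable states. -/

namespace Relation

variable {α : Type*} {r : α → α → Prop}

theorem acc_swap_iff_not_exists_run {a : α} :
    Acc (Function.swap r) a ↔ ¬∃ f : ℕ → α, f 0 = a ∧ ∀ n, r (f n) (f (n + 1)) :=
  not_acc_iff_exists_descending_chain.not_right

theorem _root_.Acc.not_rel_self {a : α} (ha : Acc r a) : ¬r a a :=
  ha.rec fun x _ ih hxx => ih x hxx hxx

theorem ReflTransGen.acc_swap {a b : α} (hab : ReflTransGen r a b) (ha : Acc (Function.swap r) a) :
    Acc (Function.swap r) b := by
  induction hab with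
  | refl => exact ha
  | tail _ hbc ih => exact ih.inv hbc

theorem not_transGen_self_of_acc_swap {a : α} (ha : Acc (Function.swap r) a) :
    ¬TransGen r a a := by
  rw [← transGen_swap]
  exact ha.transGen.not_rel_self

end Relation

open Relation in
theorem termination_implies_ranking_general
    (A : Type)
    (Δ : List A → List A → Prop)
    (Init : Set (List A))
    (hTerm : ¬ ∃ f : ℕ → List A, f 0 ∈ Init ∧ ∀ i, Δ (f i) (f (i + 1))) :
    ∃ (Inv : Set (List A)) (Rank : List A → List A → Prop),
      Init ⊆ Inv ∧
      (∀ s ∈ Inv, ∀ s', Δ s s' → s' ∈ Inv) ∧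
      (∀ s s', s ∈ Inv → s' ∈ Inv → Δ s s' → Rank s s') ∧
      (∀ x y z, Rank x y → Rank y z → Rank x z) ∧
      (∀ x, ¬ Rank x x) ∧
      Inv = {t | ∃ s ∈ Init, Relation.ReflTransGen Δ s t} ∧
      Rank = Relation.TransGen (fun x y => Δ x y ∧ x ∈ Inv ∧ y ∈ Inv) := by
  set Inv := {t | ∃ s ∈ Init, ReflTransGen Δ s t}
  refine ⟨Inv, TransGen fun x y => Δ x y ∧ x ∈ Inv ∧ y ∈ Inv,
    fun s hs => ⟨s, hs, .refl⟩,
    fun _ ⟨s, hs, hst⟩ _ hΔ => ⟨s, hs, hst.tail hΔ⟩,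
    fun _ _ hs hs' hΔ => .single ⟨hΔ, hs, hs'⟩,
    fun _ _ _ => TransGen.trans, ?_, rfl, rfl⟩
  intro x hx
  obtain ⟨_, ⟨_, ⟨s, hs, hsx⟩, _⟩, _⟩ := TransGen.head'_iff.mp hx
  have hacc : Acc (Function.swap Δ) s :=
    acc_swap_iff_not_exists_run.mpr fun ⟨f, hf0, hf⟩ => hTerm ⟨f, hf0 ▸ hs, hf⟩
  have hcycle : TransGen Δ x x := TransGen.mono (fun _ _ h => h.1) _ _ hx
  exact not_transGen_self_of_acc_swap (hsx.acc_swap hacc) hcycle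

/-- Completeness of the invariant/ranking proof rule: a terminating
length-preserving system admits an invariant and ranking relation satisfying the
five verification conditions; one may take `Inv` to be the reachable states and
`Rank` the transitive closure of `Δ` restricted to `Inv`. -/
theorem termination_implies_ranking
    (A : Type) [Fintype A]
    (Δ : List A → List A → Prop)
    (hLP : ∀ u v, Δ u v → u.length = v.length)
    (Init : Set (List A))
    (hTerm : ¬ ∃ f : ℕ → List A, f 0 ∈ Init ∧ ∀ i, Δ (f i) (f (i + 1))) :
    ∃ (Inv : Set (List A)) (Rank : List A → List A → Prop),
      Init ⊆ Inv ∧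
      (∀ s ∈ Inv, ∀ s', Δ s s' → s' ∈ Inv) ∧
      (∀ s s', s ∈ Inv → s' ∈ Inv → Δ s s' → Rank s s') ∧
      (∀ x y z, Rank x y → Rank y z → Rank x z) ∧
      (∀ x, ¬ Rank x x) ∧
      Inv = {t | ∃ s ∈ Init, Relation.ReflTransGen Δ s t} ∧
      Rank = Relation.TransGen (fun x y => Δ x y ∧ x ∈ Inv ∧ y ∈ Inv) :=
  termination_implies_ranking_general A Δ Init hTerm
end
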